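/- The complex soft-thresholding operator solves the complex LASSO problem: for any y ∈ ℂ and τ ≥ 0, the point h* = (y/|y|)·max(|y|−τ, 0) (with h* = 0 when y = 0) is the unique minimizer over h ∈ ℂ of the function f(h) = (1/2)|y − h|² + τ|h|. -/

import Mathlib

/-!
The residual `y - η` of `η = eta τ y` is a subgradient of `τ‖·‖` at `η`: it has norm
`min ‖y‖ τ ≤ τ` and points along `η`, so `⟪y - η, η⟫ = τ‖η‖`. Expanding
`‖y - h‖² = ‖(y - η) - (h - η)‖²` then gives `f h ≥ f η + ½‖h - η‖²`.
-/

open scoped RealInnerProductSpace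

/-- Complex soft-thresholding operator, with the convention `y/|y| = 0` for `y = 0`. -/
noncomputable def eta (τ : ℝ) (y : ℂ) : ℂ :=
  (y / (‖y‖ : ℂ)) * ((max (‖y‖ - τ) 0 : ℝ) : ℂ)

section InnerProductSpace

variable {E : Type*} [NormedAddCommGroup E] [InnerProductSpace ℝ E]

theorem add_half_sq_norm_le_of_real_inner_le {φ : E → ℝ} {y e h : E}
    (hsub : ⟪y - e, h - e⟫ ≤ φ h - φ e) :
    (1/2) * ‖y - e‖ ^ 2 + φ e + (1/2) * ‖h - e‖ ^ 2 ≤ (1/2) * ‖y - h‖ ^ 2 + φ h := by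
  have hexpand : ‖y - h‖ ^ 2 = ‖y - e‖ ^ 2 - 2 * ⟪y - e, h - e⟫ + ‖h - e‖ ^ 2 := by
    rw [← norm_sub_sq_real, sub_sub_sub_cancel_right]
  rw [hexpand]
  linarith

theorem real_inner_sub_le_of_norm_le {τ : ℝ} {v e : E} (hv : ‖v‖ ≤ τ)
    (he : ⟪v, e⟫ = τ * ‖e‖) (h : E) :
    ⟪v, h - e⟫ ≤ τ * ‖h‖ - τ * ‖e‖ := by
  have hvh : ⟪v, h⟫ ≤ τ * ‖h‖ :=
    (real_inner_le_norm v h).trans (mul_le_mul_of_nonneg_right hv (norm_nonneg h))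
  rw [inner_sub_right, he]
  linarith

noncomputable def softThreshold (τ : ℝ) (y : E) : E :=
  (max (‖y‖ - τ) 0 / ‖y‖) • y

theorem norm_softThreshold {τ : ℝ} (hτ : 0 ≤ τ) (y : E) :
    ‖softThreshold τ y‖ = max (‖y‖ - τ) 0 := by
  rcases eq_or_ne y 0 with rfl | hy
  · simp [softThreshold, hτ]
  · rw [softThreshold, norm_smul, Real.norm_of_nonneg (by positivity),
      div_mul_cancel₀ _ (norm_ne_zero_iff.mpr hy)]

theorem sub_softThreshold (τ : ℝ) (y : E) :
    y - softThreshold τ y = (min ‖y‖ τ / ‖y‖) • y := by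
  rcases eq_or_ne y 0 with rfl | hy
  · simp [softThreshold]
  · have hr : ‖y‖ ≠ 0 := norm_ne_zero_iff.mpr hy
    have hmin : ‖y‖ - max (‖y‖ - τ) 0 = min ‖y‖ τ := by
      rcases le_total ‖y‖ τ with h | h
      · rw [max_eq_right (by linarith), min_eq_left h, sub_zero]
      · rw [max_eq_left (by linarith), min_eq_right h]; ring
    rw [softThreshold, ← hmin, sub_div, div_self hr, sub_smul, one_smul]

theorem norm_sub_softThreshold {τ : ℝ} (hτ : 0 ≤ τ) (y : E) :
    ‖y - softThreshold τ y‖ = min ‖y‖ τ := by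
  rcases eq_or_ne y 0 with rfl | hy
  · simp [softThreshold, hτ]
  · rw [sub_softThreshold, norm_smul, Real.norm_of_nonneg (by positivity),
      div_mul_cancel₀ _ (norm_ne_zero_iff.mpr hy)]

theorem real_inner_sub_softThreshold {τ : ℝ} (hτ : 0 ≤ τ) (y : E) :
    ⟪y - softThreshold τ y, softThreshold τ y⟫ = τ * ‖softThreshold τ y‖ := by
  rcases eq_or_ne y 0 with rfl | hy
  · simp [softThreshold]
  · have hr : ‖y‖ ≠ 0 := norm_ne_zero_iff.mpr hy
    have hmin_max : min ‖y‖ τ * max (‖y‖ - τ) 0 = τ * max (‖y‖ - τ) 0 := by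
      rcases le_total ‖y‖ τ with h | h
      · rw [max_eq_right (by linarith), mul_zero, mul_zero]
      · rw [min_eq_right h]
    rw [norm_softThreshold hτ, sub_softThreshold, softThreshold, real_inner_smul_left,
      real_inner_smul_right, real_inner_self_eq_norm_sq, ← hmin_max]
    field_simp

theorem real_inner_sub_softThreshold_le {τ : ℝ} (hτ : 0 ≤ τ) (y h : E) :
    ⟪y - softThreshold τ y, h - softThreshold τ y⟫
      ≤ τ * ‖h‖ - τ * ‖softThreshold τ y‖ :=
  real_inner_sub_le_of_norm_le ((norm_sub_softThreshold hτ y).trans_le (min_le_right _ _))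
    (real_inner_sub_softThreshold hτ y) h

end InnerProductSpace

theorem eta_eq_softThreshold (τ : ℝ) (y : ℂ) : eta τ y = softThreshold τ y := by
  rw [eta, softThreshold, Complex.real_smul, Complex.ofReal_div, mul_comm, div_mul_eq_mul_div,
    mul_div_assoc]

/-- The complex soft-thresholding operator is the unique minimizer of the
complex LASSO objective `f(h) = (1/2)|y - h|² + τ|h|`. -/
theorem softThresholding_unique_minimizer (y : ℂ) (τ : ℝ) (hτ : 0 ≤ τ) :
    ∀ h : ℂ,
      (1/2) * ‖y - eta τ y‖ ^ 2 + τ * ‖eta τ y‖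
        ≤ (1/2) * ‖y - h‖ ^ 2 + τ * ‖h‖ ∧
      (h ≠ eta τ y →
        (1/2) * ‖y - eta τ y‖ ^ 2 + τ * ‖eta τ y‖
          < (1/2) * ‖y - h‖ ^ 2 + τ * ‖h‖) := by
  intro h
  have hgap := add_half_sq_norm_le_of_real_inner_le (φ := fun z => τ * ‖z‖)
    (real_inner_sub_softThreshold_le hτ y h)
  rw [← eta_eq_softThreshold] at hgap
  refine ⟨by linarith [sq_nonneg ‖h - eta τ y‖], fun hne => ?_⟩
  have hpos : 0 < ‖h - eta τ y‖ ^ 2 :=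
    pow_pos (norm_pos_iff.mpr (sub_ne_zero.mpr hne)) 2
  linarith
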